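/- arXiv:2512.00480 — 3 statements merged into one kernel-verified Lean document; each statement's English description precedes it below -/
import Mathlib

section
/- Let R be a commutative ring, S a set, and α_1,…,α_n : S → R functions; for x ∈ R^n define F_x(z) = Σ_{τ=1}^n x_τ·α_τ(z). Fix i ∈ [n], q_1,…,q_k ∈ S, λ_1,…,λ_k ∈ R and a NONZERO ω ∈ R with Σ_{j=1}^k λ_j·α_τ(q_j) = ω·1_{τ=i} for every τ ∈ [n]. If every coordinate of x lies in {0,1} ⊆ R, then the element y = Σ_{j=1}^k λ_j·F_x(q_j) satisfies: y = ω if x_i = 1, and y ≠ ω if x_i = 0; consequently the indicator 1_{y=ω} (as an element of R) equals x_i. (Full correctness of the reconstruction algorithm in Theorem 3.1.) -/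
/-!
Exchanging the two sums turns `y = ∑ⱼ λⱼ F_x(qⱼ)` into `∑_τ x_τ ∑ⱼ λⱼ α_τ(qⱼ)`, which the
hypothesis on the `λⱼ` collapses to `x_i ω`. Since `x_i ∈ {0, 1}` and `ω ≠ 0`, the equation
`x_i ω = ω` holds exactly when `x_i = 1`.
-/

open Classical

theorem Finset.sum_mul_sum_mul_comm {ι κ R : Type*} [CommSemiring R] (s : Finset ι)
    (t : Finset κ) (c : ι → R) (x : κ → R) (a : κ → ι → R) :
    ∑ j ∈ s, c j * ∑ τ ∈ t, x τ * a τ j = ∑ τ ∈ t, x τ * ∑ j ∈ s, c j * a τ j := by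
  simp only [Finset.mul_sum]
  rw [Finset.sum_comm]
  exact Finset.sum_congr rfl fun _ _ => Finset.sum_congr rfl fun _ _ => mul_left_comm _ _ _

theorem sum_mul_encoding_eq_mul {R S ι κ : Type*} [CommSemiring R] [Fintype ι] [Fintype κ]
    [DecidableEq ι] (α : ι → S → R) (i : ι) (q : κ → S) (lam : κ → R) (ω : R)
    (hspan : ∀ τ, ∑ j, lam j * α τ (q j) = if τ = i then ω else 0) (x : ι → R) :
    ∑ j, lam j * ∑ τ, x τ * α τ (q j) = x i * ω := by
  simp only [Finset.sum_mul_sum_mul_comm, hspan, mul_ite, mul_zero, Finset.sum_ite_eq',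
    Finset.mem_univ, if_true]

theorem mul_eq_self_iff_eq_one_of_zero_or_one {R : Type*} [Semiring R] {b ω : R}
    (hb : b = 0 ∨ b = 1) (hω : ω ≠ 0) : b * ω = ω ↔ b = 1 := by
  have : Nontrivial R := nontrivial_of_ne ω 0 hω
  rcases hb with rfl | rfl <;> simp [eq_comm, hω]

/-- Full correctness of the reconstruction algorithm in Theorem 3.1. -/
theorem stmt1 {R S : Type*} [CommRing R] {n k : ℕ}
    (α : Fin n → S → R) (i : Fin n) (q : Fin k → S) (lam : Fin k → R) (ω : R)
    (hω : ω ≠ 0)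
    (hspan : ∀ τ : Fin n, ∑ j : Fin k, lam j * α τ (q j) = if τ = i then ω else 0)
    (x : Fin n → R) (hx : ∀ τ, x τ = 0 ∨ x τ = 1) :
    (x i = 1 → (∑ j : Fin k, lam j * (∑ τ : Fin n, x τ * α τ (q j))) = ω) ∧
    (x i = 0 → (∑ j : Fin k, lam j * (∑ τ : Fin n, x τ * α τ (q j))) ≠ ω) ∧
    (if (∑ j : Fin k, lam j * (∑ τ : Fin n, x τ * α τ (q j))) = ω then (1 : R) else 0)
      = x i := by
  have hy_iff : (∑ j, lam j * ∑ τ, x τ * α τ (q j)) = ω ↔ x i = 1 := by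
    rw [sum_mul_encoding_eq_mul α i q lam ω hspan x]
    exact mul_eq_self_iff_eq_one_of_zero_or_one (hx i) hω
  have : Nontrivial R := nontrivial_of_ne ω 0 hω
  refine ⟨hy_iff.mpr, fun h0 hy => zero_ne_one (h0.symm.trans (hy_iff.mp hy)), ?_⟩
  rcases hx i with h | h <;> simp [hy_iff, h]
end

section
/- Let ι be a type, U, V, W finite subsets of ι, and i_1,i_2,i_3,τ_1,τ_2,τ_3 ∈ ι. Write U^0 = U, U^1 = U⊕{i_1}, V^0 = V, V^1 = V⊕{i_2}, W^0 = W, W^1 = W⊕{i_3}. Then in F_2 = ZMod 2: Σ_{(b_1,b_2,b_3)∈{0,1}^3} 1_{τ_1∈U^{b_1}}·1_{τ_2∈V^{b_2}}·1_{τ_3∈W^{b_3}} = 1_{(τ_1,τ_2,τ_3)=(i_1,i_2,i_3)}. (The eight-term cube reconstruction identity of the CGKS 2-server protocol with communication O(n^{1/3}), Section 4.1.) -/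
open Finset

theorem Fintype.sum_prod_prod_mul_mul {α β γ R : Type*} [Fintype α] [Fintype β] [Fintype γ]
    [CommSemiring R] (f : α → R) (g : β → R) (h : γ → R) :
    ∑ x : α × β × γ, f x.1 * g x.2.1 * h x.2.2 = (∑ a, f a) * (∑ b, g b) * (∑ c, h c) := by
  rw [Fintype.sum_mul_sum]
  simp_rw [sum_mul, mul_sum, Fintype.sum_prod_type]

/-- Flipping membership of `i` changes the indicator of `τ ∈ S` exactly when `τ = i`. -/
theorem sum_bool_ite_mem_symmDiff_singleton {ι R : Type*} [DecidableEq ι] [Ring R] [CharP R 2]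
    (S : Finset ι) (i τ : ι) :
    ∑ b : Bool, (if τ ∈ (if b then symmDiff S {i} else S) then (1 : R) else 0)
      = if τ = i then 1 else 0 := by
  rw [Fintype.sum_bool]
  rcases eq_or_ne τ i with rfl | hτ <;> by_cases hS : τ ∈ S <;>
    simp [mem_symmDiff, CharTwo.add_self_eq_zero, *]

/-- The eight-term cube reconstruction identity of the CGKS 2-server protocol. -/
theorem stmt6 {ι : Type*} [DecidableEq ι] (U V W : Finset ι)
    (i₁ i₂ i₃ τ₁ τ₂ τ₃ : ι) :
    (∑ b : Bool × Bool × Bool,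
      (if τ₁ ∈ (if b.1 then symmDiff U {i₁} else U) then (1 : ZMod 2) else 0) *
      (if τ₂ ∈ (if b.2.1 then symmDiff V {i₂} else V) then (1 : ZMod 2) else 0) *
      (if τ₃ ∈ (if b.2.2 then symmDiff W {i₃} else W) then (1 : ZMod 2) else 0))
    = if (τ₁, τ₂, τ₃) = (i₁, i₂, i₃) then 1 else 0 := by
  rw [Fintype.sum_prod_prod_mul_mul
    (fun b : Bool => if τ₁ ∈ (if b then symmDiff U {i₁} else U) then (1 : ZMod 2) else 0)
    (fun b : Bool => if τ₂ ∈ (if b then symmDiff V {i₂} else V) then (1 : ZMod 2) else 0)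
    (fun b : Bool => if τ₃ ∈ (if b then symmDiff W {i₃} else W) then (1 : ZMod 2) else 0)]
  simp only [sum_bool_ite_mem_symmDiff_singleton, Prod.mk.injEq, ite_zero_mul_ite_zero, mul_one,
    and_assoc]
end

section
/- Let F be a field, let g ∈ F be an element of finite multiplicative order m ≥ 1, and define ĝ : ZMod m → F by ĝ(a) = g^{a.val} (the lift of a to {0,…,m−1}). Let S ⊆ ZMod m, let ρ_1,…,ρ_k ∈ F and d_1,…,d_k ∈ ZMod m satisfy Σ_{j=1}^k ρ_j = 1 and Σ_{j=1}^k ρ_j·ĝ(d_j·δ) = 0 for every δ ∈ S. Let u_1,…,u_n, v_1,…,v_n ∈ (ZMod m)^h be an S-matching family, i.e., ⟨u_i, v_i⟩ = 0 for all i ∈ [n] and ⟨u_τ, v_i⟩ ∈ S for all τ ≠ i, where ⟨·,·⟩ is the standard inner product over ZMod m. Then for all i, τ ∈ [n] and all w ∈ (ZMod m)^h: Σ_{j=1}^k ρ_j·ĝ(⟨u_τ, w + d_j·v_i⟩) = ĝ(⟨u_τ, w⟩) if τ = i, and = 0 if τ ≠ i. (The span-capability verification of Efremenko's and Raghavendra's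 matching-vector protocols, Sections 4.3.2 and 4.4.1.) -/
/-! Because `a ↦ g ^ a.val` is a character of `ZMod m`, the sum factors as
`ĝ(⟨u_τ, w⟩) · Σ_j ρ_j ĝ(d_j ⟨u_τ, v_i⟩)`; the matching conditions turn the second factor
into `Σ_j ρ_j = 1` when `τ = i` and into a vanishing value at some `δ ∈ S` otherwise. -/

open Matrix

theorem pow_val_add_of_pow_eq_one {G : Type*} [Monoid G] {m : ℕ} [NeZero m] {g : G}
    (hg : g ^ m = 1) (a b : ZMod m) : g ^ (a + b).val = g ^ a.val * g ^ b.val := by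
  have pow_mod_eq (n : ℕ) : g ^ (n % m) = g ^ n := by
    conv_rhs => rw [← Nat.mod_add_div n m, pow_add, pow_mul, hg, one_pow, mul_one]
  rw [ZMod.val_add, pow_mod_eq, pow_add]

theorem sum_mul_pow_val_add_mul {R ι : Type*} [CommRing R] [Fintype ι] {m : ℕ} [NeZero m]
    {g : R} (hg : g ^ m = 1) (ρ : ι → R) (d : ι → ZMod m) (a δ : ZMod m) :
    ∑ j, ρ j * g ^ (a + d j * δ).val = g ^ a.val * ∑ j, ρ j * g ^ (d j * δ).val := by
  simp only [pow_val_add_of_pow_eq_one hg, Finset.mul_sum]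
  exact Finset.sum_congr rfl fun j _ => by ring

/-- Span-capability verification of Efremenko's and Raghavendra's matching-vector
protocols: with `ĝ(a) = g^{a.val}`, an `S`-decoding polynomial and an `S`-matching
family, `Σ_j ρ_j·ĝ(⟨u_τ, w + d_j·v_i⟩)` equals `ĝ(⟨u_τ, w⟩)` if `τ = i` and `0`
otherwise. -/
theorem stmt18 {F : Type*} [Field F] {m : ℕ} (hm : 1 ≤ m) (g : F)
    (hord : orderOf g = m) (S : Set (ZMod m)) {k n h : ℕ}
    (ρ : Fin k → F) (d : Fin k → ZMod m)
    (hρ1 : ∑ j : Fin k, ρ j = 1)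
    (hρ0 : ∀ δ ∈ S, ∑ j : Fin k, ρ j * g ^ (d j * δ).val = 0)
    (u v : Fin n → Fin h → ZMod m)
    (hmatch1 : ∀ i : Fin n, ∑ c : Fin h, u i c * v i c = 0)
    (hmatch2 : ∀ i τ : Fin n, τ ≠ i → (∑ c : Fin h, u τ c * v i c) ∈ S) :
    ∀ (i τ : Fin n) (w : Fin h → ZMod m),
      ∑ j : Fin k, ρ j * g ^ (∑ c : Fin h, u τ c * (w c + d j * v i c)).val
        = if τ = i then g ^ (∑ c : Fin h, u τ c * w c).val else 0 := by
  intro i τ w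
  have : NeZero m := ⟨by omega⟩
  have hg : g ^ m = 1 := hord ▸ pow_orderOf_eq_one g
  change ∑ j, ρ j * g ^ (u τ ⬝ᵥ (w + d j • v i)).val
    = if τ = i then g ^ (u τ ⬝ᵥ w).val else 0
  simp only [dotProduct_add, dotProduct_smul, smul_eq_mul]
  rw [sum_mul_pow_val_add_mul hg]
  split_ifs with hτi
  · subst hτi
    have hself : u τ ⬝ᵥ v τ = 0 := hmatch1 τ
    simp only [hself, mul_zero, ZMod.val_zero, pow_zero, mul_one, hρ1]
  · rw [hρ0 (u τ ⬝ᵥ v i) (hmatch2 i τ hτi), mul_zero]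
end
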